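/- arXiv:1909.09807 — 3 statements merged into one kernel-verified Lean document; each statement's English description precedes it below -/
import Mathlib

section
/- Termination with an explicit bound: every sequence of repair states (t₀, VA₀), (t₁, VA₁), …, (t_k, VA_k) in which each consecutive pair is obtained by a rule application step satisfies k ≤ |A| − |VA₀|; in particular, starting from (t, ∅), at most |A| rules can be applied before the process ends. -/
/-- A matching rectifying rule over attributes `A` and values `V`. -/
structure MRRule (A V : Type) [DecidableEq A] [DecidableEq V] where
  /-- the evidence attributes -/
  X : Finset A
  /-- the director pattern -/
  DP : A → V
  /-- the target attribute -/
  y : A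
  hy : y ∉ X
  /-- the wrong patterns -/
  WP : Finset V
  /-- the correct pattern -/
  cp : V
  hcp : cp ∉ WP

variable {A V : Type} [Fintype A] [DecidableEq A] [DecidableEq V]

/-- Exact matching of a tuple against a rule. -/
def MRRule.Matches (r : MRRule A V) (t : A → V) : Prop :=
  (∀ a ∈ r.X, t a = r.DP a) ∧ t r.y ∈ insert r.cp r.WP

/-- Applying a rule to a tuple. -/
def MRRule.apply (r : MRRule A V) (t : A → V) : A → V :=
  fun b => if b = r.y then r.cp else if b ∈ r.X then r.DP b else t b

/-- A rule application step between repair states. -/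
def RuleStep (s s' : (A → V) × Finset A) : Prop :=
  ∃ r : MRRule A V, r.Matches s.1 ∧ (r.y ∉ s.2 ∨ ¬ r.X ⊆ s.2) ∧
    s' = (r.apply s.1, s.2 ∪ r.X ∪ {r.y})

/-!
Every step strictly enlarges the set of verified attributes: its side condition says exactly that
`X(r) ∪ {y(r)}` is not already verified. So after `k` steps at least `k` new attributes have been
verified, and there are only `|A| - |VA₀|` attributes left to verify.
-/

theorem Nat.add_le_of_forall_lt_succ {f : ℕ → ℕ} {k : ℕ} (h : ∀ i < k, f i < f (i + 1)) :
    f 0 + k ≤ f k := by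
  induction k with
  | zero => rfl
  | succ k ih =>
    have := ih fun i hi => h i (Nat.lt_succ_of_lt hi)
    have := h k k.lt_succ_self
    omega

theorem RuleStep.verified_ssubset {α β : Type} [DecidableEq α] [DecidableEq β]
    {s s' : (α → β) × Finset α} (h : RuleStep s s') :
    s.2 ⊂ s'.2 := by
  obtain ⟨r, -, hnew, rfl⟩ := h
  refine Finset.ssubset_iff_subset_ne.2 ⟨Finset.union_subset_left Finset.subset_union_left, ?_⟩
  intro hsame
  have hcovered : r.X ∪ {r.y} ⊆ s.2 := by
    rw [← Finset.union_eq_left, ← Finset.union_assoc]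
    exact hsame.symm
  rcases hnew with hy | hX
  · exact hy (hcovered (by simp))
  · exact hX (Finset.union_subset_left hcovered)

/-- every sequence of repair states in which each consecutive
pair is obtained by a rule application step has length at most
`|A| - |VA₀|`; in particular, starting from `(t, ∅)`, at most `|A|` rules can
be applied. -/
theorem repair_sequence_length_bound
    (k : ℕ) (s : ℕ → (A → V) × Finset A)
    (hstep : ∀ i < k, RuleStep (s i) (s (i + 1))) :
    k ≤ Fintype.card A - (s 0).2.card := by
  have hgrowth : (s 0).2.card + k ≤ (s k).2.card :=
    Nat.add_le_of_forall_lt_succ fun i hi =>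
      Finset.card_lt_card (hstep i hi).verified_ssubset
  have hbounded : (s k).2.card ≤ Fintype.card A := Finset.card_le_univ _
  omega
end

section
/- Sufficiency of consistency check, same-target case (condition 1 of Algorithm Inconsis-Res): let r_i, r_j be matching rectifying rules with the same target attribute y(r_i) = y(r_j) = y, the same correct pattern cp(r_i) = cp(r_j), and director patterns agreeing on the common evidence attributes: DP(r_i)(a) = DP(r_j)(a) for all a ∈ X(r_i) ∩ X(r_j). Then for every tuple t matching both rules, apply(r_i, t) matches r_j, apply(r_j, t) matches r_i, and apply(r_j, apply(r_i, t)) = apply(r_i, apply(r_j, t)); hence r_i and r_j are consistent. -/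
variable {A V : Type} [Fintype A] [DecidableEq A] [DecidableEq V]

namespace MRRule

variable {A V : Type} [DecidableEq A] [DecidableEq V] (r : MRRule A V) (t : A → V)

@[simp]
theorem apply_target : r.apply t r.y = r.cp := by
  simp [MRRule.apply]

theorem apply_of_mem {a : A} (ha : a ∈ r.X) : r.apply t a = r.DP a := by
  have hay : a ≠ r.y := fun h => r.hy (h ▸ ha)
  simp [MRRule.apply, hay, ha]

theorem apply_of_not_mem {a : A} (hay : a ≠ r.y) (ha : a ∉ r.X) : r.apply t a = t a := by
  simp [MRRule.apply, hay, ha]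

/-- Condition 1 of Algorithm Inconsis-Res. -/
def SameTargetAgree (r s : MRRule A V) : Prop :=
  r.y = s.y ∧ r.cp = s.cp ∧ ∀ a ∈ r.X ∩ s.X, r.DP a = s.DP a

variable {r t}

theorem SameTargetAgree.symm {s : MRRule A V} (h : r.SameTargetAgree s) :
    s.SameTargetAgree r := by
  obtain ⟨hy, hcp, hdp⟩ := h
  exact ⟨hy.symm, hcp.symm, fun a ha => (hdp a (Finset.inter_comm s.X r.X ▸ ha)).symm⟩

theorem SameTargetAgree.matches_apply {s : MRRule A V} (h : r.SameTargetAgree s)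
    (hts : ∀ a ∈ s.X, t a = s.DP a) : s.Matches (r.apply t) := by
  obtain ⟨hy, hcp, hdp⟩ := h
  refine ⟨fun a has => ?_, by simp [← hy, hcp]⟩
  have hay : a ≠ r.y := fun h => s.hy (hy ▸ h ▸ has)
  by_cases har : a ∈ r.X
  · rw [r.apply_of_mem t har, hdp a (Finset.mem_inter.2 ⟨har, has⟩)]
  · rw [r.apply_of_not_mem t hay har, hts a has]

theorem SameTargetAgree.apply_comm {s : MRRule A V} (h : r.SameTargetAgree s) :
    s.apply (r.apply t) = r.apply (s.apply t) := by
  obtain ⟨hy, hcp, hdp⟩ := h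
  funext b
  by_cases hby : b = r.y
  · rw [hby.trans hy, s.apply_target, ← hy, r.apply_target, hcp]
  have hsy : b ≠ s.y := hy ▸ hby
  by_cases hr : b ∈ r.X <;> by_cases hs : b ∈ s.X
  · rw [s.apply_of_mem _ hs, r.apply_of_mem _ hr, hdp b (Finset.mem_inter.2 ⟨hr, hs⟩)]
  · rw [s.apply_of_not_mem _ hsy hs, r.apply_of_mem _ hr, r.apply_of_mem _ hr]
  · rw [s.apply_of_mem _ hs, r.apply_of_not_mem _ hby hr, s.apply_of_mem _ hs]
  · rw [s.apply_of_not_mem _ hsy hs, r.apply_of_not_mem _ hby hr, r.apply_of_not_mem _ hby hr,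
      s.apply_of_not_mem _ hsy hs]

end MRRule

/-- sufficiency of the consistency check, same-target case:
two rules with the same target attribute, the same correct pattern, and
director patterns agreeing on the common evidence attributes are
consistent. -/
theorem same_target_rules_consistent (ri rj : MRRule A V)
    (hy : ri.y = rj.y) (hcp : ri.cp = rj.cp)
    (hdp : ∀ a ∈ ri.X ∩ rj.X, ri.DP a = rj.DP a) :
    ∀ t : A → V, ri.Matches t → rj.Matches t →
      rj.Matches (ri.apply t) ∧ ri.Matches (rj.apply t) ∧
      rj.apply (ri.apply t) = ri.apply (rj.apply t) := by
  intro t hti htj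
  have h : ri.SameTargetAgree rj := ⟨hy, hcp, hdp⟩
  exact ⟨h.matches_apply htj.1, h.symm.matches_apply hti.1, h.apply_comm⟩
end

section
/- Sufficiency of consistency check, target-in-evidence case (condition 2 of Algorithm Inconsis-Res): let r_i, r_j be matching rectifying rules with distinct targets y(r_i) ≠ y(r_j), such that y(r_j) ∈ X(r_i), y(r_i) ∉ X(r_j), the director patterns agree on the common evidence attributes (DP(r_i)(a) = DP(r_j)(a) for all a ∈ X(r_i) ∩ X(r_j)), and DP(r_i)(y(r_j)) = cp(r_j). Then for every tuple t matching both rules, apply(r_i, t) matches r_j, apply(r_j, t) matches r_i, and apply(r_j, apply(r_i, t)) = apply(r_i, apply(r_j, t)); hence r_i and r_j are consistent. -/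
variable {A V : Type} [Fintype A] [DecidableEq A] [DecidableEq V]

/-
Idea: since `t` already satisfies the evidence of `r_j`, applying `r_j` only resets the target
`y(r_j)` to `cp(r_j) = DP(r_i)(y(r_j))`. That attribute lies in `X(r_i)`, so `r_i` overwrites it
anyway, and `apply(r_i, apply(r_j, t)) = apply(r_i, t)`. Conversely `apply(r_i, t)` already
satisfies `r_j` completely (evidence and correct pattern), so `r_j` leaves it unchanged.
-/

namespace MRRule

variable {A V : Type} [DecidableEq A] [DecidableEq V]

theorem ne_y_of_mem_X {r : MRRule A V} {a : A} (ha : a ∈ r.X) : a ≠ r.y :=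
  fun h => r.hy (h ▸ ha)

theorem apply_self_y (r : MRRule A V) (t : A → V) : r.apply t r.y = r.cp :=
  if_pos rfl

theorem apply_of_mem_X {r : MRRule A V} (t : A → V) {a : A} (ha : a ∈ r.X) :
    r.apply t a = r.DP a := by
  simp only [apply, if_neg (ne_y_of_mem_X ha), if_pos ha]

theorem apply_of_ne_of_notMem_X {r : MRRule A V} (t : A → V) {b : A} (hby : b ≠ r.y)
    (hbX : b ∉ r.X) : r.apply t b = t b := by
  simp only [apply, if_neg hby, if_neg hbX]

theorem matches_of_eq_cp {r : MRRule A V} {t : A → V} (hX : ∀ a ∈ r.X, t a = r.DP a)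
    (hy : t r.y = r.cp) : r.Matches t :=
  ⟨hX, hy ▸ Finset.mem_insert_self _ _⟩

theorem apply_eq_update {r : MRRule A V} {t : A → V} (hX : ∀ a ∈ r.X, t a = r.DP a) :
    r.apply t = Function.update t r.y r.cp := by
  funext b
  by_cases hby : b = r.y
  · rw [hby, apply_self_y, Function.update_self]
  rw [Function.update_of_ne hby]
  by_cases hbX : b ∈ r.X
  · rw [apply_of_mem_X t hbX, hX b hbX]
  · exact apply_of_ne_of_notMem_X t hby hbX

theorem apply_eq_self {r : MRRule A V} {t : A → V} (hX : ∀ a ∈ r.X, t a = r.DP a)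
    (hy : t r.y = r.cp) : r.apply t = t := by
  rw [apply_eq_update hX, ← hy, Function.update_eq_self]

theorem apply_update_of_mem_X (r : MRRule A V) (t : A → V) {a : A} (ha : a ∈ r.X) (v : V) :
    r.apply (Function.update t a v) = r.apply t := by
  funext b
  by_cases hba : b = a
  · rw [hba, apply_of_mem_X _ ha, apply_of_mem_X _ ha]
  · simp only [apply, Function.update_of_ne hba]

theorem Matches.update_DP {r : MRRule A V} {t : A → V} (ht : r.Matches t) {a : A}
    (ha : a ∈ r.X) : r.Matches (Function.update t a (r.DP a)) := by
  refine ⟨fun b hb => ?_, by rw [Function.update_of_ne (ne_y_of_mem_X ha).symm]; exact ht.2⟩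
  by_cases hba : b = a
  · rw [hba, Function.update_self]
  · rw [Function.update_of_ne hba, ht.1 b hb]

theorem apply_eq_DP_of_mem_X {r r' : MRRule A V} {t : A → V}
    (ht : ∀ a ∈ r'.X, t a = r'.DP a) (hy : r.y ∉ r'.X)
    (hdp : ∀ a ∈ r.X ∩ r'.X, r.DP a = r'.DP a) :
    ∀ a ∈ r'.X, r.apply t a = r'.DP a := by
  intro a ha
  have hay : a ≠ r.y := fun h => hy (h ▸ ha)
  by_cases haX : a ∈ r.X
  · rw [apply_of_mem_X t haX, hdp a (Finset.mem_inter.mpr ⟨haX, ha⟩)]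
  · rw [apply_of_ne_of_notMem_X t hay haX, ht a ha]

end MRRule

open MRRule in
theorem target_in_evidence_rules_consistent_general (ri rj : MRRule A V)
    (hji : rj.y ∈ ri.X) (hij : ri.y ∉ rj.X)
    (hdp : ∀ a ∈ ri.X ∩ rj.X, ri.DP a = rj.DP a)
    (hd : ri.DP rj.y = rj.cp) :
    ∀ t : A → V, ri.Matches t → rj.Matches t →
      rj.Matches (ri.apply t) ∧ ri.Matches (rj.apply t) ∧
      rj.apply (ri.apply t) = ri.apply (rj.apply t) := by
  intro t hti htj
  have hX : ∀ a ∈ rj.X, ri.apply t a = rj.DP a := apply_eq_DP_of_mem_X htj.1 hij hdp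
  have hy : ri.apply t rj.y = rj.cp := by rw [apply_of_mem_X t hji, hd]
  have hj : rj.apply t = Function.update t rj.y (ri.DP rj.y) := hd ▸ apply_eq_update htj.1
  refine ⟨matches_of_eq_cp hX hy, hj ▸ hti.update_DP hji, ?_⟩
  rw [apply_eq_self hX hy, hj, apply_update_of_mem_X ri t hji]

/-- sufficiency of the consistency check, target-in-evidence
case: two rules with distinct targets such that `y(r_j) ∈ X(r_i)`,
`y(r_i) ∉ X(r_j)`, director patterns agreeing on common evidence attributes,
and `DP(r_i)(y(r_j)) = cp(r_j)`, are consistent. -/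
theorem target_in_evidence_rules_consistent (ri rj : MRRule A V)
    (hyy : ri.y ≠ rj.y)
    (hji : rj.y ∈ ri.X) (hij : ri.y ∉ rj.X)
    (hdp : ∀ a ∈ ri.X ∩ rj.X, ri.DP a = rj.DP a)
    (hd : ri.DP rj.y = rj.cp) :
    ∀ t : A → V, ri.Matches t → rj.Matches t →
      rj.Matches (ri.apply t) ∧ ri.Matches (rj.apply t) ∧
      rj.apply (ri.apply t) = ri.apply (rj.apply t) :=
  target_in_evidence_rules_consistent_general ri rj hji hij hdp hd
end
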